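/- Let c ∈ ℝ, r > 0, ε > 0 and α(ε) = (e^ε + 1)/(e^ε − 1). Suppose γ1 < γ2 are real numbers and p : [c−r, c+r] → [0,1] (interpreted as p(w) = P(Q(w) = γ1) for a binary-output stochastic quantizer Q with output levels γ1, γ2) satisfy: (C1, unbiasedness) p(w)·γ1 + (1−p(w))·γ2 = w for all w ∈ [c−r, c+r]; (C2, ε-LDP) p(w) ≤ e^ε·p(w′) and 1−p(w) ≤ e^ε·(1−p(w′)) for all w, w′ ∈ [c−r, c+r]; (C3, minimal MSE) for every triple (γ1′, γ2′, p′) with γ1′ < γ2′ satisfying C1 and C2, one has p(w)·γ1² + (1−p(w))·γ2² − w² ≤ p′(w)·γ1′² + (1−p′(w))·γ2′² − w² for every w ∈ [c−r, c+r]. Then necessarily γ1 = c − r·α(ε), γ2 = c + r·α(ε), and p(w) = 1/2 − (w−c)/(2r·α(ε)) for all w ∈ [c−r, c+r]. -/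

import Mathlib

/-!
An unbiased quantizer with levels `γ1 < γ2` outputs `γ1` with probability `(γ2 - w)/(γ2 - γ1)`,
so its MSE at `w` is `(γ2 - w)(w - γ1)`. Comparing the two endpoints of `[c - r, c + r]`, the
`ε`-LDP constraint forces both `γ2 - c` and `c - γ1` to be at least `A = r α(ε)`. The quantizer
with levels `c ± A` is unbiased and `ε`-LDP and has MSE `A²` at `c`, so minimality at `w = c`
gives `(γ2 - c)(c - γ1) ≤ A²`, which leaves only `γ2 - c = c - γ1 = A`; unbiasedness then
determines `p`.
-/

open Real Set

/-- `α(ε) = (e^ε + 1)/(e^ε − 1)`. -/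
noncomputable def alphaFn (ε : ℝ) : ℝ := (Real.exp ε + 1) / (Real.exp ε - 1)

section Alpha

variable {ε : ℝ}

lemma one_lt_alphaFn (hε : 0 < ε) : 1 < alphaFn ε := by
  have : 0 < exp ε - 1 := by linarith [one_lt_exp_iff.2 hε]
  rw [alphaFn, lt_div_iff₀ this]
  linarith

lemma mul_alphaFn_le_iff (hε : 0 < ε) (r x : ℝ) :
    r * alphaFn ε ≤ x ↔ x + r ≤ exp ε * (x - r) := by
  have hE : 0 < exp ε - 1 := by linarith [one_lt_exp_iff.2 hε]
  rw [alphaFn, mul_div_assoc', div_le_iff₀ hE]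
  constructor <;> intro h <;> linarith

end Alpha

section Unbiased

variable {p γ1 γ2 w : ℝ}

lemma mse_eq_of_unbiased (h : p * γ1 + (1 - p) * γ2 = w) :
    p * γ1 ^ 2 + (1 - p) * γ2 ^ 2 - w ^ 2 = (γ2 - w) * (w - γ1) := by
  linear_combination (γ1 + γ2) * h

lemma prob_mul_sub_of_unbiased (h : p * γ1 + (1 - p) * γ2 = w) :
    p * (γ2 - γ1) = γ2 - w := by
  linear_combination -h

lemma one_sub_prob_mul_sub_of_unbiased (h : p * γ1 + (1 - p) * γ2 = w) :
    (1 - p) * (γ2 - γ1) = w - γ1 := by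
  linear_combination h

lemma prob_eq_of_unbiased {q : ℝ} (hγ : γ1 ≠ γ2) (hp : p * γ1 + (1 - p) * γ2 = w)
    (hq : q * γ1 + (1 - q) * γ2 = w) : p = q := by
  have : (p - q) * (γ1 - γ2) = 0 := by linear_combination hp - hq
  simpa [sub_eq_zero, hγ] using this

end Unbiased

section LevelBounds

variable {c r ε γ1 γ2 p₁ p₂ : ℝ}

lemma mul_alphaFn_le_upper_level (hε : 0 < ε) (hγ : γ1 < γ2)
    (h₁ : p₁ * γ1 + (1 - p₁) * γ2 = c - r) (h₂ : p₂ * γ1 + (1 - p₂) * γ2 = c + r)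
    (hldp : p₁ ≤ exp ε * p₂) : r * alphaFn ε ≤ γ2 - c := by
  rw [mul_alphaFn_le_iff hε]
  have h := mul_le_mul_of_nonneg_right hldp (sub_nonneg.2 hγ.le)
  rw [mul_assoc, prob_mul_sub_of_unbiased h₁, prob_mul_sub_of_unbiased h₂] at h
  linarith

lemma mul_alphaFn_le_lower_level (hε : 0 < ε) (hγ : γ1 < γ2)
    (h₁ : p₁ * γ1 + (1 - p₁) * γ2 = c - r) (h₂ : p₂ * γ1 + (1 - p₂) * γ2 = c + r)
    (hldp : 1 - p₂ ≤ exp ε * (1 - p₁)) : r * alphaFn ε ≤ c - γ1 := by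
  rw [mul_alphaFn_le_iff hε]
  have h := mul_le_mul_of_nonneg_right hldp (sub_nonneg.2 hγ.le)
  rw [mul_assoc, one_sub_prob_mul_sub_of_unbiased h₁, one_sub_prob_mul_sub_of_unbiased h₂] at h
  linarith

end LevelBounds

/-- The probability of the lower level `c - A` in the quantizer with levels `c ± A`. -/
noncomputable def ldpflProb (c A w : ℝ) : ℝ := 1 / 2 - (w - c) / (2 * A)

section LDPFL

variable {r A ε : ℝ}

lemma ldpflProb_unbiased (hA : A ≠ 0) (c w : ℝ) :
    ldpflProb c A w * (c - A) + (1 - ldpflProb c A w) * (c + A) = w := by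
  rw [ldpflProb]
  field_simp
  ring

lemma ldpflProb_eq_div (hA : A ≠ 0) (c w : ℝ) :
    ldpflProb c A w = (A - (w - c)) / (2 * A) := by
  rw [ldpflProb]
  field_simp

lemma one_sub_ldpflProb_eq_div (hA : A ≠ 0) (c w : ℝ) :
    1 - ldpflProb c A w = (A + (w - c)) / (2 * A) := by
  rw [ldpflProb]
  field_simp
  ring

lemma ldpflProb_mem_Icc {c w : ℝ} (hA : 0 < A) (hrA : r ≤ A) (hw : w ∈ Icc (c - r) (c + r)) :
    ldpflProb c A w ∈ Icc (0 : ℝ) 1 := by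
  obtain ⟨hw₁, hw₂⟩ := hw
  rw [ldpflProb_eq_div hA.ne', mem_Icc, div_le_one (by positivity)]
  exact ⟨div_nonneg (by linarith) (by positivity), by linarith⟩

lemma ldpflProb_ldp {c w w' : ℝ} (hA : 0 < A) (hldp : A + r ≤ exp ε * (A - r))
    (hw : w ∈ Icc (c - r) (c + r)) (hw' : w' ∈ Icc (c - r) (c + r)) :
    ldpflProb c A w ≤ exp ε * ldpflProb c A w' ∧
      1 - ldpflProb c A w ≤ exp ε * (1 - ldpflProb c A w') := by
  obtain ⟨hw₁, hw₂⟩ := hw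
  obtain ⟨hw₁', hw₂'⟩ := hw'
  have h2A : 0 < 2 * A := by positivity
  rw [one_sub_ldpflProb_eq_div hA.ne', one_sub_ldpflProb_eq_div hA.ne', ldpflProb_eq_div hA.ne',
    ldpflProb_eq_div hA.ne', mul_div_assoc', mul_div_assoc', div_le_div_iff_of_pos_right h2A,
    div_le_div_iff_of_pos_right h2A]
  have hE := (exp_pos ε).le
  constructor
  · linarith [mul_le_mul_of_nonneg_left (show A - r ≤ A - (w' - c) by linarith) hE]
  · linarith [mul_le_mul_of_nonneg_left (show A - r ≤ A + (w' - c) by linarith) hE]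

end LDPFL

lemma eq_of_mul_le_sq {a b A : ℝ} (hA : 0 < A) (ha : A ≤ a) (hb : A ≤ b) (h : a * b ≤ A ^ 2) :
    a = A ∧ b = A := by
  have hAb : A * b ≤ a * b := mul_le_mul_of_nonneg_right ha (hA.le.trans hb)
  have hAA : A * A ≤ A * b := mul_le_mul_of_nonneg_left hb hA.le
  constructor <;> nlinarith

theorem stmt0 (c r ε : ℝ) (hr : 0 < r) (hε : 0 < ε)
    (γ1 γ2 : ℝ) (p : ℝ → ℝ) (hγ : γ1 < γ2)
    (hC1 : ∀ w ∈ Icc (c - r) (c + r), p w * γ1 + (1 - p w) * γ2 = w)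
    (hC2 : ∀ w ∈ Icc (c - r) (c + r), ∀ w' ∈ Icc (c - r) (c + r),
      p w ≤ Real.exp ε * p w' ∧ 1 - p w ≤ Real.exp ε * (1 - p w'))
    (hC3 : ∀ (γ1' γ2' : ℝ) (p' : ℝ → ℝ), γ1' < γ2' →
      (∀ w ∈ Icc (c - r) (c + r), p' w ∈ Icc (0 : ℝ) 1) →
      (∀ w ∈ Icc (c - r) (c + r), p' w * γ1' + (1 - p' w) * γ2' = w) →
      (∀ w ∈ Icc (c - r) (c + r), ∀ w' ∈ Icc (c - r) (c + r),
        p' w ≤ Real.exp ε * p' w' ∧ 1 - p' w ≤ Real.exp ε * (1 - p' w')) →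
      ∀ w ∈ Icc (c - r) (c + r),
        p w * γ1 ^ 2 + (1 - p w) * γ2 ^ 2 - w ^ 2 ≤
          p' w * γ1' ^ 2 + (1 - p' w) * γ2' ^ 2 - w ^ 2) :
    γ1 = c - r * alphaFn ε ∧ γ2 = c + r * alphaFn ε ∧
      ∀ w ∈ Icc (c - r) (c + r), p w = 1 / 2 - (w - c) / (2 * r * alphaFn ε) := by
  set A := r * alphaFn ε
  have hrA : r < A := lt_mul_of_one_lt_right hr (one_lt_alphaFn hε)
  have hA : 0 < A := hr.trans hrA
  have hleft : c - r ∈ Icc (c - r) (c + r) := ⟨le_rfl, by linarith⟩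
  have hright : c + r ∈ Icc (c - r) (c + r) := ⟨by linarith, le_rfl⟩
  have hcenter : c ∈ Icc (c - r) (c + r) := ⟨by linarith, by linarith⟩
  have hupper : A ≤ γ2 - c := mul_alphaFn_le_upper_level hε hγ (hC1 _ hleft) (hC1 _ hright)
    (hC2 _ hleft _ hright).1
  have hlower : A ≤ c - γ1 := mul_alphaFn_le_lower_level hε hγ (hC1 _ hleft) (hC1 _ hright)
    (hC2 _ hright _ hleft).2
  have hmse : (γ2 - c) * (c - γ1) ≤ A ^ 2 := by
    have h := hC3 (c - A) (c + A) (ldpflProb c A) (by linarith)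
      (fun w hw => ldpflProb_mem_Icc hA hrA.le hw) (fun w _ => ldpflProb_unbiased hA.ne' c w)
      (fun w hw w' hw' => ldpflProb_ldp hA ((mul_alphaFn_le_iff hε r A).1 le_rfl) hw hw') c hcenter
    rw [mse_eq_of_unbiased (hC1 c hcenter), mse_eq_of_unbiased (ldpflProb_unbiased hA.ne' c c)] at h
    linarith
  obtain ⟨hγ2, hγ1⟩ := eq_of_mul_le_sq hA hupper hlower hmse
  obtain rfl : γ1 = c - A := by linarith
  obtain rfl : γ2 = c + A := by linarith
  refine ⟨rfl, rfl, fun w hw => ?_⟩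
  rw [mul_assoc]
  exact prob_eq_of_unbiased hγ.ne (hC1 w hw) (ldpflProb_unbiased hA.ne' c w)
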